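/- The two pseudo-potential equations p_x = -z²nf² and p_t = -z²nqrf² - (1/2)qg² - fg/(2z) are compatible (∂_t p_x = ∂_x p_t) whenever (q, r, m, n) solves the 2-mCH system m_t = (mqr)_x, n_t = (nqr)_x with m = q - q_x, n = -r - r_x, and (f,g) solves the associated linear spectral problem with matrices F and G. -/

import Mathlib

noncomputable def pdx (F : ℝ → ℝ → ℝ) : ℝ → ℝ → ℝ :=
  fun x t => deriv (fun x' => F x' t) x

noncomputable def pdt (F : ℝ → ℝ → ℝ) : ℝ → ℝ → ℝ :=
  fun x t => deriv (fun t' => F x t') t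

lemma hasDerivAt_pdx' (F : ℝ → ℝ → ℝ)
    (hF : ContDiff ℝ (⊤ : ℕ∞) (fun p : ℝ × ℝ => F p.1 p.2)) (x t : ℝ) :
    HasDerivAt (fun x' => F x' t) (pdx F x t) x := by
  have hline : HasDerivAt (fun x' : ℝ => (x', t)) ((1 : ℝ), (0 : ℝ)) x :=
    (hasDerivAt_id x).prodMk (hasDerivAt_const x t)
  have hFd := (hF.differentiable (by simp) (x, t)).hasFDerivAt
  have h' : HasDerivAt (fun x' => F x' t)
      (fderiv ℝ (fun p : ℝ × ℝ => F p.1 p.2) (x, t) (1, 0)) x :=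
    by have := hFd.comp_hasDerivAt x hline; exact this
  have e : pdx F x t = fderiv ℝ (fun p : ℝ × ℝ => F p.1 p.2) (x, t) (1, 0) := h'.deriv
  rw [e]; exact h'

lemma hasDerivAt_pdt' (F : ℝ → ℝ → ℝ)
    (hF : ContDiff ℝ (⊤ : ℕ∞) (fun p : ℝ × ℝ => F p.1 p.2)) (x t : ℝ) :
    HasDerivAt (fun t' => F x t') (pdt F x t) t := by
  have hline : HasDerivAt (fun t' : ℝ => (x, t')) ((0 : ℝ), (1 : ℝ)) t :=
    (hasDerivAt_const t x).prodMk (hasDerivAt_id t)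
  have hFd := (hF.differentiable (by simp) (x, t)).hasFDerivAt
  have h' : HasDerivAt (fun t' => F x t')
      (fderiv ℝ (fun p : ℝ × ℝ => F p.1 p.2) (x, t) (0, 1)) t :=
    hFd.comp_hasDerivAt t hline
  have e : pdt F x t = fderiv ℝ (fun p : ℝ × ℝ => F p.1 p.2) (x, t) (0, 1) := h'.deriv
  rw [e]; exact h'

lemma contDiff_pdx' (F : ℝ → ℝ → ℝ)
    (hF : ContDiff ℝ (⊤ : ℕ∞) (fun p : ℝ × ℝ => F p.1 p.2)) :
    ContDiff ℝ (⊤ : ℕ∞) (fun p : ℝ × ℝ => pdx F p.1 p.2) := by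
  have key : (fun p : ℝ × ℝ => pdx F p.1 p.2)
      = fun p : ℝ × ℝ => fderiv ℝ (fun p : ℝ × ℝ => F p.1 p.2) p ((1 : ℝ), (0 : ℝ)) := by
    funext p
    have hline : HasDerivAt (fun x' : ℝ => (x', p.2)) ((1 : ℝ), (0 : ℝ)) p.1 :=
      (hasDerivAt_id p.1).prodMk (hasDerivAt_const p.1 p.2)
    have hFd := (hF.differentiable (by simp) p).hasFDerivAt
    have h' : HasDerivAt (fun x' => F x' p.2)
        (fderiv ℝ (fun p : ℝ × ℝ => F p.1 p.2) p (1, 0)) p.1 :=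
      by have := hFd.comp_hasDerivAt p.1 hline; exact this
    exact h'.deriv
  rw [key]
  exact (hF.fderiv_right (by simp)).clm_apply contDiff_const

theorem stmt_11 (q r m n f g : ℝ → ℝ → ℝ) (z : ℝ) (hz : z ≠ 0)
    (hq : ContDiff ℝ (⊤ : ℕ∞) (fun p : ℝ × ℝ => q p.1 p.2))
    (hr : ContDiff ℝ (⊤ : ℕ∞) (fun p : ℝ × ℝ => r p.1 p.2))
    (hfs : ContDiff ℝ (⊤ : ℕ∞) (fun p : ℝ × ℝ => f p.1 p.2))
    (hgs : ContDiff ℝ (⊤ : ℕ∞) (fun p : ℝ × ℝ => g p.1 p.2))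
    (hm : ∀ x t, m x t = q x t - pdx q x t)
    (hn : ∀ x t, n x t = -(r x t) - pdx r x t)
    (hmch1 : ∀ x t, pdt m x t = pdx (fun x' t' => m x' t' * q x' t' * r x' t') x t)
    (hmch2 : ∀ x t, pdt n x t = pdx (fun x' t' => n x' t' * q x' t' * r x' t') x t)
    (hfx : ∀ x t, pdx f x t = f x t / 2 + z * m x t * g x t)
    (hgx : ∀ x t, pdx g x t = z * n x t * f x t - g x t / 2)
    (hft : ∀ x t, pdt f x t = (1/(4*z^2) + q x t * r x t / 2) * f x t
        + (q x t/(2*z) + z * m x t * q x t * r x t) * g x t)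
    (hgt : ∀ x t, pdt g x t = (-(r x t)/(2*z) + z * n x t * q x t * r x t) * f x t
        + (-1/(4*z^2) - q x t * r x t / 2) * g x t) :
    ∀ x t : ℝ,
      pdt (fun x' t' => -z^2 * n x' t' * (f x' t')^2) x t
      = pdx (fun x' t' => -z^2 * n x' t' * q x' t' * r x' t' * (f x' t')^2
          - 1/2 * q x' t' * (g x' t')^2 - f x' t' * g x' t' / (2*z)) x t := by
  intro x t
  have hnS : ContDiff ℝ (⊤ : ℕ∞) (fun p : ℝ × ℝ => n p.1 p.2) := by
    have e : (fun p : ℝ × ℝ => n p.1 p.2)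
        = fun p : ℝ × ℝ => -(r p.1 p.2) - pdx r p.1 p.2 := by
      funext p; rw [hn]
    rw [e]; exact hr.neg.sub (contDiff_pdx' r hr)
  have hNQR : ContDiff ℝ (⊤ : ℕ∞) (fun p : ℝ × ℝ => n p.1 p.2 * q p.1 p.2 * r p.1 p.2) :=
    (hnS.mul hq).mul hr
  have hfX := hasDerivAt_pdx' f hfs x t
  have hgX := hasDerivAt_pdx' g hgs x t
  have hqX := hasDerivAt_pdx' q hq x t
  have hNQRX := hasDerivAt_pdx' (fun x' t' => n x' t' * q x' t' * r x' t') hNQR x t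
  have hnT := hasDerivAt_pdt' n hnS x t
  have hfT := hasDerivAt_pdt' f hfs x t
  -- LHS
  have hL := (hnT.const_mul (-z^2)).mul (hfT.pow 2)
  have eL : pdt (fun x' t' => -z^2 * n x' t' * (f x' t')^2) x t
      = -z^2 * pdt n x t * (f x t)^2
        + -z^2 * n x t * (2 * f x t ^ 1 * pdt f x t) := hL.deriv
  -- RHS
  have hR := (((hNQRX.const_mul (-z^2)).mul (hfX.pow 2)).sub
      ((hqX.const_mul ((1:ℝ)/2)).mul (hgX.pow 2))).sub
      ((hfX.mul hgX).div_const (2*z))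
  have efun : (fun x' => -z^2 * n x' t * q x' t * r x' t * (f x' t)^2
          - 1/2 * q x' t * (g x' t)^2 - f x' t * g x' t / (2*z))
      = fun x' => -z^2 * (n x' t * q x' t * r x' t) * (f x' t)^2
          - 1/2 * q x' t * (g x' t)^2 - f x' t * g x' t / (2*z) := by
    funext x'; ring
  have eR : pdx (fun x' t' => -z^2 * n x' t' * q x' t' * r x' t' * (f x' t')^2
          - 1/2 * q x' t' * (g x' t')^2 - f x' t' * g x' t' / (2*z)) x t
      = (-z^2 * pdx (fun x' t' => n x' t' * q x' t' * r x' t') x t * (f x t)^2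
          + -z^2 * (n x t * q x t * r x t) * (2 * f x t ^ 1 * pdx f x t))
        - (1/2 * pdx q x t * (g x t)^2 + 1/2 * q x t * (2 * g x t ^ 1 * pdx g x t))
        - (pdx f x t * g x t + f x t * pdx g x t) / (2*z) := by
    show deriv _ x = _
    rw [efun]
    exact hR.deriv
  rw [eL, eR, hmch2, hft, hfx, hgx, hm]
  field_simp
  ring
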